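/- arXiv:math/9607227 — 2 statements merged into one kernel-verified Lean document; each statement's English description precedes it below -/
import Mathlib

section
/- (Δ-system lemma) For every family ⟨A_i : i < ω₁⟩ of finite sets there is an uncountable set B ⊆ ω₁ and a finite set R (the root) such that for all distinct i, j ∈ B, A_i ∩ A_j = R. -/
/-!
Pigeonhole on the sizes gives an uncountable subfamily of sets of one size `n`; induct on `n`.
If some point lies in uncountably many of the sets, put it into the root and remove it from
those sets, which lowers their size. Otherwise every point lies in only countably many sets;
then a maximal pairwise disjoint subfamily is uncountable, since a countable one meets only
countably many other sets, so it could be enlarged. It is a Δ-system with empty root.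
-/

open Set

section DeltaSystem

variable {ι α : Type*}

def IsDeltaSystem [DecidableEq α] (A : ι → Finset α) (B : Set ι) (R : Finset α) : Prop :=
  ∀ i ∈ B, ∀ j ∈ B, i ≠ j → A i ∩ A j = R

theorem IsDeltaSystem.insert_of_forall_mem [DecidableEq α] {A : ι → Finset α} {B : Set ι}
    {R : Finset α} {x : α} (hR : IsDeltaSystem (fun i ↦ (A i).erase x) B R)
    (hx : ∀ i ∈ B, x ∈ A i) : IsDeltaSystem A B (insert x R) := by
  intro i hi j hj hij
  have hxij : x ∈ A i ∩ A j := Finset.mem_inter.mpr ⟨hx i hi, hx j hj⟩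
  rw [← hR i hi j hj hij, Finset.erase_inter, Finset.inter_erase, Finset.erase_idem,
    Finset.insert_erase hxij]

theorem isDeltaSystem_empty_of_pairwiseDisjoint [DecidableEq α] {A : ι → Finset α} {B : Set ι}
    (h : B.PairwiseDisjoint A) : IsDeltaSystem A B ∅ :=
  fun _ hi _ hj hij ↦ Finset.disjoint_iff_inter_eq_empty.mp (h hi hj hij)

theorem exists_maximal_pairwiseDisjoint_subset (S : Set ι) (A : ι → Set α) :
    ∃ B, Maximal (fun C ↦ C ⊆ S ∧ C.PairwiseDisjoint A) B := by
  refine zorn_subset _ fun c hc hchain ↦ ⟨⋃₀ c, ⟨sUnion_subset fun C hC ↦ (hc hC).1, ?_⟩,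
    fun _ ↦ subset_sUnion_of_mem⟩
  exact (pairwiseDisjoint_sUnion hchain.directedOn).mpr fun C hC ↦ (hc hC).2

theorem exists_not_countable_pairwiseDisjoint {S : Set ι} (hS : ¬S.Countable) {A : ι → Set α}
    (hA : ∀ i ∈ S, (A i).Countable) (hfib : ∀ x, {i ∈ S | x ∈ A i}.Countable) :
    ∃ B ⊆ S, ¬B.Countable ∧ B.PairwiseDisjoint A := by
  obtain ⟨B, ⟨hBS, hBdisj⟩, hBmax⟩ := exists_maximal_pairwiseDisjoint_subset S A
  refine ⟨B, hBS, fun hB ↦ ?_, hBdisj⟩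
  set T := ⋃ x ∈ ⋃ i ∈ B, A i, {i ∈ S | x ∈ A i}
  have hT : T.Countable :=
    (hB.biUnion fun i hi ↦ hA i (hBS hi)).biUnion fun x _ ↦ hfib x
  obtain ⟨i₀, hi₀S, hi₀⟩ := not_subset.mp fun h ↦ hS ((hB.union hT).mono h)
  have hi₀B : i₀ ∉ B := fun h ↦ hi₀ (Or.inl h)
  have hdisj : ∀ j ∈ B, Disjoint (A i₀) (A j) := by
    refine fun j hj ↦ Set.disjoint_left.mpr fun x hx₀ hxj ↦ hi₀ (Or.inr ?_)
    exact mem_biUnion (mem_biUnion hj hxj) ⟨hi₀S, hx₀⟩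
  have hins : insert i₀ B ⊆ S ∧ (insert i₀ B).PairwiseDisjoint A :=
    ⟨insert_subset hi₀S hBS, hBdisj.insert fun j hj _ ↦ hdisj j hj⟩
  exact hi₀B (hBmax hins (subset_insert i₀ B) (mem_insert i₀ B))

theorem exists_not_countable_isDeltaSystem_of_card_le [DecidableEq α] (n : ℕ) {S : Set ι}
    (hS : ¬S.Countable) {A : ι → Finset α} (hA : ∀ i ∈ S, (A i).card ≤ n) :
    ∃ B ⊆ S, ¬B.Countable ∧ ∃ R, IsDeltaSystem A B R := by
  induction n generalizing S A with
  | zero =>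
    refine ⟨S, subset_rfl, hS, ∅, fun i hi j _ _ ↦ ?_⟩
    simp [Finset.card_eq_zero.mp (Nat.le_zero.mp (hA i hi))]
  | succ n ih =>
    by_cases hfib : ∀ x, {i ∈ S | x ∈ A i}.Countable
    · obtain ⟨B, hBS, hB, hBdisj⟩ := exists_not_countable_pairwiseDisjoint hS
        (fun i _ ↦ (A i).countable_toSet) hfib
      exact ⟨B, hBS, hB, ∅, isDeltaSystem_empty_of_pairwiseDisjoint fun i hi j hj hij ↦
        Finset.disjoint_coe.mp (hBdisj hi hj hij)⟩
    · obtain ⟨x, hx⟩ := not_forall.mp hfib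
      have hcard : ∀ i ∈ {i ∈ S | x ∈ A i}, ((A i).erase x).card ≤ n := fun i hi ↦ by
        have := hA i hi.1
        rw [Finset.card_erase_of_mem hi.2]
        omega
      obtain ⟨B, hBS, hB, R, hR⟩ := ih hx hcard
      exact ⟨B, fun i hi ↦ (hBS hi).1, hB, insert x R,
        hR.insert_of_forall_mem fun i hi ↦ (hBS hi).2⟩

theorem exists_not_countable_preimage_singleton [Uncountable ι] {β : Type*} [Countable β]
    (f : ι → β) : ∃ b, ¬(f ⁻¹' {b}).Countable := by
  by_contra! h
  have := countable_iUnion h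
  rw [← preimage_iUnion, iUnion_of_singleton, preimage_univ] at this
  exact not_countable_univ this

theorem exists_not_countable_isDeltaSystem [Uncountable ι] [DecidableEq α] (A : ι → Finset α) :
    ∃ B : Set ι, ¬B.Countable ∧ ∃ R, IsDeltaSystem A B R := by
  obtain ⟨n, hn⟩ := exists_not_countable_preimage_singleton fun i ↦ (A i).card
  obtain ⟨B, -, hB, hR⟩ := exists_not_countable_isDeltaSystem_of_card_le n hn fun i hi ↦ hi.le
  exact ⟨B, hB, hR⟩

end DeltaSystem

instance uncountable_Iio_ord_aleph_one :
    Uncountable {i : Ordinal // i < (Cardinal.aleph 1).ord} := by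
  rw [← Cardinal.aleph0_lt_mk_iff]
  change Cardinal.aleph0 < Cardinal.mk (Iio (Cardinal.aleph 1).ord)
  rw [Cardinal.mk_Iio_ordinal, Cardinal.card_ord, Cardinal.aleph0_lt_lift]
  exact Cardinal.aleph0_lt_aleph_one

/-- Δ-system lemma: any ω₁-indexed family of finite sets has an uncountable
subfamily forming a Δ-system. -/
theorem delta_system_lemma (α : Type)
    [DecidableEq α]
    (A : {i : Ordinal // i < (Cardinal.aleph 1).ord} → Finset α) :
    ∃ B : Set {i : Ordinal // i < (Cardinal.aleph 1).ord}, ¬ B.Countable ∧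
      ∃ R : Finset α, ∀ i ∈ B, ∀ j ∈ B, i ≠ j → A i ∩ A j = R :=
  exists_not_countable_isDeltaSystem A
end

section
/- (Generalized Δ-system lemma) Let κ be a regular uncountable cardinal and let λ = (2^{<κ})⁺. For every family ⟨A_i : i < λ⟩ of sets each of cardinality < κ, there is a set B ⊆ λ of cardinality λ such that ⟨A_i : i ∈ B⟩ forms a Δ-system, i.e., there is a set R with A_i ∩ A_j = R for all distinct i, j ∈ B. -/
/-!
Identify the index set with `θ = (2^{<κ})⁺`, viewed as a well-order, and embed `⋃ i, A i` into it.
A pressing-down argument gives `β` such that cofinally many `A x` meet `Iio x` only below `β`.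
As `(2^{<κ})^ν = 2^{<κ}` for `ν < κ`, fewer than `θ` sets can occur as a trace `A x ∩ Iio β`, so
cofinally many of these `A x` share one trace `R`. Thinning them out so that `A x ⊆ Iio y` whenever
`x < y` leaves a Δ-system with root `R`.
-/

open Cardinal Set Order Ordinal

universe u

namespace Cardinal

variable {κ : Cardinal.{u}}

theorem le_two_powerlt (κ : Cardinal) : κ ≤ 2 ^< κ :=
  le_of_forall_lt fun ν hν => (cantor ν).trans_le (le_powerlt 2 hν)

theorem lt_powerlt_iff {a b c : Cardinal} : a < b ^< c ↔ ∃ x < c, a < b ^ x := by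
  simpa using powerlt_le.not

theorem noMaxOrder_toType_ord {c : Cardinal} (hc : ℵ₀ ≤ c) : NoMaxOrder c.ord.ToType :=
  isSuccPrelimit_type_lt_iff.1 (by simpa using (isSuccLimit_ord hc).isSuccPrelimit)

theorem mk_Iio_toType_lt {c : Cardinal.{u}} (z : c.ord.ToType) : #(Iio z) < c := by
  simpa using mk_Iio_lt z (by simp)

theorem exists_mk_Iio_toType_ord_eq {a c : Cardinal.{u}} (h : a < c) :
    ∃ z : c.ord.ToType, #(Iio z) = a := by
  refine ⟨ToType.mk ⟨a.ord, ord_lt_ord.2 h⟩, ?_⟩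
  have hz := congrArg card <|
    ToType.mk_symm_apply_coe (ToType.mk (⟨a.ord, ord_lt_ord.2 h⟩ : Iio c.ord))
  simp only [RelIso.symm_apply_apply, card_ord] at hz
  exact hz.symm

theorem pow_le_two_powerlt (hκ : ℵ₀ ≤ κ) {a c ν : Cardinal.{u}} (ha : a ≤ 2 ^ c) (hc : c < κ)
    (hν : ν < κ) : a ^ ν ≤ 2 ^< κ :=
  calc a ^ ν ≤ (2 ^ c) ^ ν := power_le_power_right ha
    _ = 2 ^ (c * ν) := power_mul.symm
    _ ≤ 2 ^< κ := le_powerlt 2 (mul_lt_of_lt hκ hc hν)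

theorem le_cof_ord_two_powerlt (hκ : κ.IsRegular) (h : ∀ c < κ, 2 ^ c < 2 ^< κ) :
    κ ≤ (2 ^< κ).ord.cof := by
  have hμ : ℵ₀ ≤ 2 ^< κ := hκ.aleph0_le.trans (le_two_powerlt κ)
  have := noMaxOrder_toType_ord hμ
  rw [← cof_toType, le_cof_iff]
  intro S hS
  by_contra! hSκ
  choose c hcκ hc using fun b : S => lt_powerlt_iff.1 (mk_Iio_toType_lt b.1)
  have hc' : ⨆ b, c b < κ := iSup_lt_of_lt_cof_ord (by rwa [hκ.cof_ord]) hcκ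
  have hcover : (⋃ b : S, Iio b.1) = Set.univ := by
    rw [iUnion_subtype]; exact isCofinal_iff_iUnion_Iio_eq_univ.1 hS
  have : 2 ^< κ < 2 ^< κ :=
    calc 2 ^< κ = #(⋃ b : S, Iio b.1) := by rw [hcover, mk_univ, mk_ord_toType]
      _ ≤ #S * ⨆ b : S, #(Iio b.1) := mk_iUnion_le _
      _ ≤ #S * 2 ^ (⨆ b, c b) := by
          gcongr
          exact ciSup_le' fun b => (hc b).le.trans
            (power_le_power_left two_ne_zero (le_ciSup bddAbove_of_small b))
      _ < 2 ^< κ := mul_lt_of_lt hμ (hSκ.trans_le (le_two_powerlt κ)) (h _ hc')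
  exact lt_irrefl _ this

theorem two_powerlt_pow_le (hκ : κ.IsRegular) {ν : Cardinal.{u}} (hν : ν < κ) :
    (2 ^< κ) ^ ν ≤ 2 ^< κ := by
  by_cases hattained : ∃ c < κ, 2 ^< κ ≤ 2 ^ c
  · obtain ⟨c, hc, hle⟩ := hattained
    exact pow_le_two_powerlt hκ.aleph0_le hle hc hν
  set O := (2 ^< κ).ord.ToType
  have hcof : κ ≤ Order.cof O := by
    rw [cof_toType]; exact le_cof_ord_two_powerlt hκ (by simpa using hattained)
  have hcover : (Set.univ : Set (ν.out → O)) ⊆ ⋃ b : O, {f | ∀ x, f x < b} := by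
    intro f _
    obtain ⟨b, hb⟩ := not_isCofinal_iff.1 fun hf => (cof_le hf).not_gt <|
      mk_range_le.trans_lt ((mk_out ν).trans_lt (hν.trans_le hcof))
    exact mem_iUnion.2 ⟨b, fun x => hb _ (mem_range_self x)⟩
  have hbounded : ∀ b : O, #{f : ν.out → O | ∀ x, f x < b} ≤ 2 ^< κ := by
    intro b
    obtain ⟨c, hc, hb⟩ := lt_powerlt_iff.1 (mk_Iio_toType_lt b)
    calc #{f : ν.out → O | ∀ x, f x < b} = #(ν.out → Iio b) :=
          mk_congr (Equiv.subtypePiEquivPi (p := fun _ y => y < b))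
      _ = #(Iio b) ^ ν := by rw [← power_def, mk_out]
      _ ≤ 2 ^< κ := pow_le_two_powerlt hκ.aleph0_le hb.le hc hν
  calc (2 ^< κ) ^ ν = #(Set.univ : Set (ν.out → O)) := by
        rw [mk_univ, ← power_def, mk_out, mk_ord_toType]
    _ ≤ #O * ⨆ b : O, #{f : ν.out → O | ∀ x, f x < b} :=
        (mk_le_mk_of_subset hcover).trans (mk_iUnion_le _)
    _ ≤ 2 ^< κ * 2 ^< κ := by
        rw [mk_ord_toType]; gcongr; exact ciSup_le' hbounded
    _ = 2 ^< κ := mul_eq_self (hκ.aleph0_le.trans (le_two_powerlt κ))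

theorem mk_subsets_mk_lt_le_two_powerlt (hκ : κ.IsRegular) {W : Type u} {t : Set W}
    (ht : #t ≤ 2 ^< κ) : #{s : Set W // s ⊆ t ∧ #s < κ} ≤ 2 ^< κ := by
  have hμ : ℵ₀ ≤ 2 ^< κ := hκ.aleph0_le.trans (le_two_powerlt κ)
  have hcover : {s : Set W | s ⊆ t ∧ #s < κ} ⊆
      ⋃ z : κ.ord.ToType, {s | s ⊆ t ∧ #s ≤ #(Iio z)} := by
    rintro s ⟨hst, hs⟩
    obtain ⟨z, hz⟩ := exists_mk_Iio_toType_ord_eq hs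
    exact mem_iUnion.2 ⟨z, hst, hz.ge⟩
  calc #{s : Set W // s ⊆ t ∧ #s < κ}
      ≤ #κ.ord.ToType * ⨆ z : κ.ord.ToType, #{s | s ⊆ t ∧ #s ≤ #(Iio z)} :=
        (mk_le_mk_of_subset hcover).trans (mk_iUnion_le _)
    _ ≤ 2 ^< κ * 2 ^< κ := by
        rw [mk_ord_toType]
        gcongr
        · exact le_two_powerlt κ
        · exact ciSup_le' fun z => (mk_bounded_subset_le t _).trans <|
            (power_le_power_right (max_le ht hμ)).trans
              (two_powerlt_pow_le hκ (mk_Iio_toType_lt z))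
    _ = 2 ^< κ := mul_eq_self hμ

theorem IsRegular.isRegularCardinalOrder_toType {θ : Cardinal} (hθ : θ.IsRegular) :
    IsRegularCardinalOrder θ.ord.ToType :=
  ⟨by rw [type_toType, cof_toType, hθ.cof_ord]⟩

end Cardinal

def IsDeltaSystemOn {ι α : Type*} (A : ι → Set α) (B : Set ι) : Prop :=
  ∃ R : Set α, ∀ i ∈ B, ∀ j ∈ B, i ≠ j → A i ∩ A j = R

section DeltaSystem

variable {ι ι' α β : Type*} {A : ι → Set α} {B : Set ι}

theorem isDeltaSystemOn_of_lt [LinearOrder ι] (R : Set α)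
    (h : ∀ i ∈ B, ∀ j ∈ B, i < j → A i ∩ A j = R) : IsDeltaSystemOn A B :=
  ⟨R, fun i hi j hj hij => hij.lt_or_gt.elim (h i hi j hj)
    fun hji => inter_comm (A i) (A j) ▸ h j hj i hi hji⟩

theorem IsDeltaSystemOn.preimage (f : β → α) (h : IsDeltaSystemOn A B) :
    IsDeltaSystemOn (fun i => f ⁻¹' A i) B :=
  let ⟨R, hR⟩ := h
  ⟨f ⁻¹' R, fun i hi j hj hij => by rw [← preimage_inter, hR i hi j hj hij]⟩

theorem IsDeltaSystemOn.image {f : α → β} (hf : Function.Injective f) (h : IsDeltaSystemOn A B) :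
    IsDeltaSystemOn (fun i => f '' A i) B :=
  let ⟨R, hR⟩ := h
  ⟨f '' R, fun i hi j hj hij => by rw [← image_inter hf, hR i hi j hj hij]⟩

theorem IsDeltaSystemOn.comp {e : ι' → ι} (he : Function.Injective e) (h : IsDeltaSystemOn A B) :
    IsDeltaSystemOn (A ∘ e) (e ⁻¹' B) :=
  let ⟨R, hR⟩ := h
  ⟨R, fun _ hi _ hj hij => hR _ hi _ hj (he.ne hij)⟩

theorem IsDeltaSystemOn.of_embedding {O : Type*} (e : ι ≃ O) {U : Set α} (hU : ∀ i, A i ⊆ U)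
    {g : U → O} (hg : Function.Injective g) {B : Set O}
    (h : IsDeltaSystemOn (fun x => g '' (Subtype.val ⁻¹' A (e.symm x))) B) :
    IsDeltaSystemOn A (e ⁻¹' B) := by
  convert ((h.comp e.injective).preimage g).image Subtype.val_injective using 2 with i
  simp [hg.preimage_image, inter_eq_right.2 (hU i)]

end DeltaSystem

theorem not_isCofinal_of_mk_lt_cof {O : Type*} [Preorder O] {s : Set O} (hs : #s < cof O) :
    ¬ IsCofinal s :=
  fun h => (cof_le h).not_gt hs

section WellOrder

variable {O : Type u} [LinearOrder O]

theorem IsCofinal.exists_isCofinal_fiber {σ : Type u} {T : Set O} (hT : IsCofinal T)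
    (f : O → σ) (hf : #(f '' T) < cof O) : ∃ r, IsCofinal {x ∈ T | f x = r} := by
  obtain ⟨⟨r, _⟩, hr⟩ := isCofinal_of_isCofinal_iUnion (s := fun r : f '' T => {x ∈ T | f x = r})
    (hT.mono fun x hx => mem_iUnion.2 ⟨⟨f x, mem_image_of_mem f hx⟩, hx, rfl⟩) hf
  exact ⟨r, hr⟩

theorem exists_strictMono_forall_lt_subset_Iio {I : Type u} [LinearOrder I] [WellFoundedLT I]
    (hI : ∀ z : I, #(Iio z) < cof O) {T : Set O} (hT : IsCofinal T) {S : O → Set O}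
    (hS : ∀ x, ¬ IsCofinal (S x)) :
    ∃ e : I → O, StrictMono e ∧ (∀ z, e z ∈ T) ∧ ∀ y z, y < z → S (e y) ⊆ Iio (e z) := by
  choose b hb using fun x => not_isCofinal_iff.1 (hS x)
  have hnext : ∀ s : Set O, #s < cof O → ∃ t ∈ T, ∀ x ∈ s, x < t ∧ S x ⊆ Iio t := by
    intro s hs
    obtain ⟨c₁, hc₁⟩ := not_isCofinal_iff.1 (not_isCofinal_of_mk_lt_cof hs)
    obtain ⟨c₂, hc₂⟩ := not_isCofinal_iff.1 (not_isCofinal_of_mk_lt_cof (mk_image_le.trans_lt hs))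
    obtain ⟨t, htT, ht⟩ := hT (max c₁ c₂)
    refine ⟨t, htT, fun x hx => ⟨(hc₁ x hx).trans_le (le_of_max_le_left ht), fun a ha => ?_⟩⟩
    exact (hb x a ha).trans ((hc₂ _ (mem_image_of_mem b hx)).trans_le (le_of_max_le_right ht))
  choose next hnextT hnext using hnext
  let e : I → O := wellFounded_lt.fix fun z e =>
    next (range fun y : Iio z => e y y.2) (mk_range_le.trans_lt (hI z))
  have he (z : I) : e z = next (range fun y : Iio z => e y) (mk_range_le.trans_lt (hI z)) :=
    wellFounded_lt.fix_eq _ z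
  have hlt (y z : I) (hyz : y < z) : e y < e z ∧ S (e y) ⊆ Iio (e z) := by
    rw [he z]
    exact hnext _ _ _ ⟨⟨y, hyz⟩, rfl⟩
  exact ⟨e, fun y z h => (hlt y z h).1, fun z => he z ▸ hnextT _ _, fun y z h => (hlt y z h).2⟩

variable [WellFoundedLT O] {κ : Cardinal.{u}}

/-- `α` is the limit of a `κ`-sequence each of whose terms bounds the sets `X b` for the earlier
terms `b`; it has cofinality `κ`. -/
theorem exists_forall_subset_Iio_exists_notMem (hκ : κ.IsRegular) (hκO : κ < cof O)
    {X : O → Set O} (hX : ∀ b, ¬ IsCofinal (X b)) :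
    ∃ α, ∀ s ⊆ Iio α, #s < κ → ∃ b, s ⊆ Iio b ∧ α ∉ X b := by
  have := noMaxOrder_toType_ord hκ.aleph0_le
  obtain ⟨G, hG, -, hGX⟩ := exists_strictMono_forall_lt_subset_Iio (I := κ.ord.ToType)
    (fun z => (mk_Iio_toType_lt z).trans hκO) IsCofinal.univ hX
  obtain ⟨α, hαG, hαmin⟩ := wellFounded_lt.has_min {b | ∀ z, G z < b} <| by
    obtain ⟨b, hb⟩ := not_isCofinal_iff.1 <| not_isCofinal_of_mk_lt_cof <|
      mk_range_le.trans_lt ((mk_ord_toType κ).trans_lt hκO)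
    exact ⟨b, fun z => hb _ (mem_range_self z)⟩
  refine ⟨α, fun s hsα hs => ?_⟩
  have hcov (a : s) : ∃ z, a.1 ≤ G z := by
    by_contra! h
    exact hαmin a.1 h (hsα a.2)
  choose z hz using hcov
  have hzκ : #(range z) < cof κ.ord.ToType := by
    rw [cof_toType, hκ.cof_ord]; exact mk_range_le.trans_lt hs
  obtain ⟨zs, hzs⟩ := not_isCofinal_iff.1 (not_isCofinal_of_mk_lt_cof hzκ)
  obtain ⟨z', hz'⟩ := exists_gt zs
  refine ⟨G zs, fun a ha => (hz ⟨a, ha⟩).trans_lt (hG (hzs _ (mem_range_self _))), fun hαX => ?_⟩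
  exact (hαG z').not_gt (hGX zs z' hz' hαX)

/-- A weak form of Fodor's lemma for the regressive map `x ↦ sup (A x ∩ Iio x)`. -/
theorem exists_isCofinal_setOf_inter_Iio_subset_Iio (hκ : κ.IsRegular) (hκO : κ < cof O)
    {A : O → Set O} (hA : ∀ x, #(A x) < κ) : ∃ β, IsCofinal {x | A x ∩ Iio x ⊆ Iio β} := by
  by_contra! h
  obtain ⟨α, hα⟩ := exists_forall_subset_Iio_exists_notMem hκ hκO h
  obtain ⟨b, hb, hαb⟩ := hα (A α ∩ Iio α) inter_subset_right
    ((mk_le_mk_of_subset inter_subset_left).trans_lt (hA α))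
  exact hαb hb

variable [IsRegularCardinalOrder O]

theorem IsCofinal.mk_eq {B : Set O} (hB : IsCofinal B) : #B = #O :=
  (mk_set_le B).antisymm (cof_eq_cardinalMk (α := O) ▸ cof_le hB)

theorem IsCofinal.exists_isCofinal_subset_forall_lt_subset_Iio {T : Set O} (hT : IsCofinal T)
    {S : O → Set O} (hS : ∀ x, ¬ IsCofinal (S x)) :
    ∃ B ⊆ T, IsCofinal B ∧ ∀ x ∈ B, ∀ y ∈ B, x < y → S x ⊆ Iio y := by
  obtain ⟨e, he, heT, heS⟩ := exists_strictMono_forall_lt_subset_Iio (I := O)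
    (fun z => by simpa using mk_Iio_lt z (by simp)) hT hS
  refine ⟨range e, range_subset_iff.2 heT, isCofinal_range_of_strictMono he, ?_⟩
  rintro _ ⟨y, rfl⟩ _ ⟨z, rfl⟩ h
  exact heS y z (he.lt_iff_lt.1 h)

theorem exists_mk_eq_isDeltaSystemOn (hκ : κ.IsRegular) (hκO : κ < #O)
    (hcount : ∀ β : O, #{s : Set O // s ⊆ Iio β ∧ #s < κ} < #O)
    {A : O → Set O} (hA : ∀ x, #(A x) < κ) : ∃ B : Set O, #B = #O ∧ IsDeltaSystemOn A B := by
  rw [← cof_eq_cardinalMk] at hκO hcount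
  obtain ⟨β, hβ⟩ := exists_isCofinal_setOf_inter_Iio_subset_Iio hκ hκO hA
  have htraces : (fun x => A x ∩ Iio β) '' {x | A x ∩ Iio x ⊆ Iio β} ⊆
      {s | s ⊆ Iio β ∧ #s < κ} := by
    rintro _ ⟨x, -, rfl⟩
    exact ⟨inter_subset_right, (mk_le_mk_of_subset inter_subset_left).trans_lt (hA x)⟩
  obtain ⟨R, hR⟩ := hβ.exists_isCofinal_fiber _ ((mk_le_mk_of_subset htraces).trans_lt (hcount β))
  obtain ⟨B, hBR, hB, hBA⟩ := hR.exists_isCofinal_subset_forall_lt_subset_Iio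
    fun x => not_isCofinal_of_mk_lt_cof ((hA x).trans hκO)
  refine ⟨B, hB.mk_eq, isDeltaSystemOn_of_lt R fun x hx y hy hxy => ?_⟩
  obtain ⟨-, hxR⟩ := hBR hx
  obtain ⟨hyβ, hyR⟩ := hBR hy
  refine subset_antisymm (fun a ha => hyR ▸ ⟨ha.2, hyβ ⟨ha.2, hBA x hx y hy hxy ha.1⟩⟩) ?_
  exact subset_inter (hxR ▸ inter_subset_left) (hyR ▸ inter_subset_left)

end WellOrder

theorem generalized_delta_system_lemma_general (κ : Cardinal) (hreg : κ.IsRegular)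
    (ι : Type) (hι : #ι = Order.succ (2 ^< κ))
    (α : Type) (A : ι → Set α) (hA : ∀ i, #(A i) < κ) :
    ∃ B : Set ι, #B = Order.succ (2 ^< κ) ∧
      ∃ R : Set α, ∀ i ∈ B, ∀ j ∈ B, i ≠ j → A i ∩ A j = R := by
  have hμ : ℵ₀ ≤ 2 ^< κ := hreg.aleph0_le.trans (le_two_powerlt κ)
  have hθ : (succ (2 ^< κ)).IsRegular := isRegular_succ hμ
  have hκθ : κ < succ (2 ^< κ) := (le_two_powerlt κ).trans_lt (lt_succ _)
  have := hθ.isRegularCardinalOrder_toType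
  obtain ⟨e⟩ : Nonempty (ι ≃ (succ (2 ^< κ)).ord.ToType) := Cardinal.eq.1 (by simp [hι])
  obtain ⟨g⟩ : Nonempty (↥(⋃ i, A i) ↪ (succ (2 ^< κ)).ord.ToType) := by
    rw [← le_def, mk_ord_toType, ← mul_eq_self hθ.aleph0_le]
    exact (mk_iUnion_le _).trans (mul_le_mul' hι.le (ciSup_le' fun i => ((hA i).trans hκθ).le))
  obtain ⟨B, hB, hΔ⟩ := exists_mk_eq_isDeltaSystemOn hreg (by simpa using hκθ)
    (fun β => by simpa using lt_succ_of_le (mk_subsets_mk_lt_le_two_powerlt hreg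
      (lt_succ_iff.1 (mk_Iio_toType_lt β))))
    (A := fun x => g '' (Subtype.val ⁻¹' A (e.symm x)))
    fun x => mk_image_le.trans_lt <|
      (mk_preimage_of_injective _ _ Subtype.val_injective).trans_lt (hA _)
  exact ⟨e ⁻¹' B, by simpa [mk_preimage_equiv] using hB,
    hΔ.of_embedding e (fun i => subset_iUnion A i) g.injective⟩

/-- Generalized Δ-system lemma: for κ regular uncountable and λ = (2^{<κ})⁺,
any λ-indexed family of sets of size < κ has a subfamily of size λ forming a
Δ-system. -/
theorem generalized_delta_system_lemma (κ : Cardinal) (hreg : κ.IsRegular)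
    (hunc : Cardinal.aleph0 < κ)
    (ι : Type) (hι : #ι = Order.succ (2 ^< κ))
    (α : Type) (A : ι → Set α) (hA : ∀ i, #(A i) < κ) :
    ∃ B : Set ι, #B = Order.succ (2 ^< κ) ∧
      ∃ R : Set α, ∀ i ∈ B, ∀ j ∈ B, i ≠ j → A i ∩ A j = R :=
  generalized_delta_system_lemma_general κ hreg ι hι α A hA
end
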